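/- arXiv:1405.2067 — 3 statements merged into one kernel-verified Lean document; each statement's English description precedes it below -/
import Mathlib

section
/- Let (W, μ) be a probability space, (ξ_i)_{i∈ℕ} an increasing sequence of ℕ∪{∞}-valued random variables with ξ_0 = 0, and (𝓕_i)_{i∈ℕ} a filtration of sub-σ-algebras such that ξ_i is 𝓕_i-measurable. Suppose there exist ϑ₀ > 0 and C₀ ≥ 1 such that μ(ξ_i − ξ_{i−1} ≥ q | 𝓕_{i−1}) ≤ C₀ e^{−q ϑ₀} almost surely for all integers q, i ≥ 1. Then for every ε > 0 there exist Q > 0 and ϑ > 0 such that for every positive integer n, μ({w : (1/n) Σ_{i=1}^n 𝟙_Q(ξ_i(w) − ξ_{i−1}(w)) ≥ ε}) ≤ e^{−ϑ n}, where 𝟙_Q(q) = q if q ≥ Q and 𝟙_Q(q) = 0 otherwise. -/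
open MeasureTheory Filter

/-- Truncation `𝟙_Q` on `ℕ∞`, viewed as a real number: `𝟙_Q(q) = q` if `q ≥ Q`, else `0`. -/
noncomputable def truncQ (Q : ℕ) (q : ℕ∞) : ℝ :=
  if (Q : ℕ∞) ≤ q then (q.toNat : ℝ) else 0

/-!
Write `Yᵢ = 𝟙_Q(ξᵢ - ξᵢ₋₁)`. By the layer-cake formula
`exp (ϑ₀ Y / 2) = 1 + ∑_q (exp (ϑ₀ (q + 1) / 2) - exp (ϑ₀ q / 2)) 𝟙{q < Y}`, and `q < Yᵢ` forces an
increment of size at least `max (q + 1) Q`, so the tail hypothesis gives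
`μ[exp (ϑ₀ Yᵢ / 2) | 𝓕ᵢ₋₁] ≤ 1 + δ_Q` with `δ_Q = O(exp (-ϑ₀ Q / 4))`. Peeling off one conditional
expectation at a time bounds `∫ exp (ϑ₀ / 2 ∑ Yᵢ)` by `(1 + δ_Q) ^ n`, and the exponential Markov
inequality gives `μ (ε n ≤ ∑ Yᵢ) ≤ exp (-ϑ₀ ε n / 2) (1 + δ_Q) ^ n`. Taking `Q` with
`1 + δ_Q ≤ exp (ϑ₀ ε / 4)` yields the rate `ϑ = ϑ₀ ε / 4`.
-/

open Real Finset ProbabilityTheory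

def truncNat (Q : ℕ) (q : ℕ∞) : ℕ :=
  if (Q : ℕ∞) ≤ q then q.toNat else 0

lemma truncQ_eq_truncNat (Q : ℕ) (q : ℕ∞) : truncQ Q q = truncNat Q q := by
  unfold truncQ truncNat
  split_ifs <;> simp

lemma add_max_le_of_le_truncNat {Q k : ℕ} {a b : ℕ∞} (hk : 1 ≤ k) (h : k ≤ truncNat Q (a - b)) :
    b + (max k Q : ℕ) ≤ a := by
  unfold truncNat at h
  split_ifs at h with hQ
  · have hne : a - b ≠ ⊤ := by
      rintro htop
      simp only [htop, ENat.toNat_top, nonpos_iff_eq_zero] at h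
      omega
    obtain ⟨d, hd⟩ := ENat.ne_top_iff_exists.mp hne
    rw [← hd] at h hQ
    simp only [ENat.toNat_natCast, Nat.cast_le] at h hQ
    have hlt : b < a := tsub_pos_iff_lt.mp (by rw [← hd]; exact_mod_cast (by omega : 0 < d))
    calc b + (max k Q : ℕ) ≤ b + (a - b) := by
          rw [← hd]
          gcongr
          omega
      _ = a := add_tsub_cancel_of_le hlt.le
  · omega

lemma apply_min_eq_add_sum (f : ℕ → ℝ) (m B : ℕ) :
    f (min m B) = f 0 + ∑ q ∈ range B, if q < m then f (q + 1) - f q else 0 := by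
  rw [← sum_filter, show {q ∈ range B | q < m} = range (min m B) by ext; simp; omega,
    sum_range_sub]
  ring

section CondExp

variable {W : Type*} {m m0 : MeasurableSpace W} {μ : Measure W} [IsFiniteMeasure μ]

lemma condExp_comp_min_le (hm : m ≤ m0) {Y : W → ℕ} (hY : Measurable Y) {f : ℕ → ℝ}
    (hf : Monotone f) (B : ℕ) {p : ℕ → ℝ}
    (hp : ∀ q < B, μ[{w | q < Y w}.indicator (fun _ => (1 : ℝ)) | m] ≤ᵐ[μ] fun _ => p q) :
    μ[fun w => f (min (Y w) B) | m] ≤ᵐ[μ]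
      fun _ => f 0 + ∑ q ∈ range B, (f (q + 1) - f q) * p q := by
  set ind : ℕ → W → ℝ := fun q => {w | q < Y w}.indicator (fun _ => (1 : ℝ))
  have hind : ∀ q, Integrable (ind q) μ := fun q =>
    (integrable_const 1).indicator (measurableSet_lt measurable_const hY)
  have hlayer : (fun w => f (min (Y w) B)) =
      (fun _ => f 0) + ∑ q ∈ range B, (f (q + 1) - f q) • ind q := by
    ext w
    simp [ind, apply_min_eq_add_sum f (Y w) B, Set.indicator_apply]
  have hsum : ∀ᵐ w ∂μ, ∀ q ∈ range B,
      μ[(f (q + 1) - f q) • ind q | m] w = (f (q + 1) - f q) * μ[ind q | m] w ∧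
        μ[ind q | m] w ≤ p q :=
    (eventually_all_finset _).mpr fun q hq =>
      (condExp_smul _ _ _).and (hp q (mem_range.mp hq))
  filter_upwards [condExp_add (integrable_const (f 0))
      (integrable_finsetSum' _ fun q _ => (hind q).smul (f (q + 1) - f q)) m,
    condExp_finsetSum (fun q _ => (hind q).smul (f (q + 1) - f q)) m, hsum]
    with w hadd hfin hq
  rw [hlayer, hadd, Pi.add_apply, condExp_const hm, hfin, Finset.sum_apply]
  gcongr with q hqB
  rw [(hq q hqB).1]
  exact mul_le_mul_of_nonneg_left (hq q hqB).2 (sub_nonneg.mpr (hf (Nat.le_succ q)))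

end CondExp

noncomputable def tailBound (ϑ₀ C₀ : ℝ) (Q : ℕ) : ℝ :=
  C₀ * (1 - exp (-(ϑ₀ / 4)))⁻¹ * exp (-(ϑ₀ / 4)) ^ Q

lemma tailBound_nonneg {ϑ₀ C₀ : ℝ} (hϑ₀ : 0 < ϑ₀) (hC₀ : 0 ≤ C₀) (Q : ℕ) :
    0 ≤ tailBound ϑ₀ C₀ Q := by
  have hs1 : exp (-(ϑ₀ / 4)) < 1 := exp_lt_one_iff.mpr (by linarith)
  exact mul_nonneg (mul_nonneg hC₀ (inv_nonneg.mpr (by linarith))) (by positivity)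

lemma sum_exp_mul_exp_le_tailBound {ϑ₀ C₀ : ℝ} (hϑ₀ : 0 < ϑ₀) (hC₀ : 0 ≤ C₀) (Q B : ℕ) :
    ∑ q ∈ range B, (exp (ϑ₀ / 2 * ((q + 1 : ℕ) : ℝ)) - exp (ϑ₀ / 2 * q)) *
        (C₀ * exp (-((max (q + 1) Q : ℕ) : ℝ) * ϑ₀))
      ≤ tailBound ϑ₀ C₀ Q := by
  rw [tailBound]
  set s := exp (-(ϑ₀ / 4))
  have hs1 : s < 1 := exp_lt_one_iff.mpr (by linarith)
  have hterm : ∀ q : ℕ, (exp (ϑ₀ / 2 * ((q + 1 : ℕ) : ℝ)) - exp (ϑ₀ / 2 * q)) *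
      (C₀ * exp (-((max (q + 1) Q : ℕ) : ℝ) * ϑ₀)) ≤ C₀ * s ^ Q * s ^ q := by
    intro q
    have hq : ((q + 1 : ℕ) : ℝ) ≤ (max (q + 1) Q : ℕ) := by exact_mod_cast le_max_left _ _
    have hQ : (Q : ℝ) ≤ (max (q + 1) Q : ℕ) := by exact_mod_cast le_max_right _ _
    calc (exp (ϑ₀ / 2 * ((q + 1 : ℕ) : ℝ)) - exp (ϑ₀ / 2 * q)) *
          (C₀ * exp (-((max (q + 1) Q : ℕ) : ℝ) * ϑ₀))
        ≤ exp (ϑ₀ / 2 * ((q + 1 : ℕ) : ℝ)) * (C₀ * exp (-((max (q + 1) Q : ℕ) : ℝ) * ϑ₀)) := by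
          gcongr
          linarith [exp_pos (ϑ₀ / 2 * q)]
      _ = C₀ * exp (ϑ₀ / 2 * ((q + 1 : ℕ) : ℝ) - ((max (q + 1) Q : ℕ) : ℝ) * ϑ₀) := by
          rw [sub_eq_add_neg, exp_add]; ring_nf
      _ ≤ C₀ * exp (Q * -(ϑ₀ / 4) + q * -(ϑ₀ / 4)) := by
          gcongr
          push_cast at hq hQ ⊢
          nlinarith [mul_le_mul_of_nonneg_left hq hϑ₀.le, mul_le_mul_of_nonneg_left hQ hϑ₀.le]
      _ = C₀ * s ^ Q * s ^ q := by rw [exp_add, exp_nat_mul, exp_nat_mul]; ring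
  calc _ ≤ ∑ q ∈ range B, C₀ * s ^ Q * s ^ q := sum_le_sum fun q _ => hterm q
    _ = C₀ * s ^ Q * ∑ q ∈ range B, s ^ q := by rw [mul_sum]
    _ ≤ C₀ * s ^ Q * (1 - s)⁻¹ := by
        refine mul_le_mul_of_nonneg_left ?_ (by positivity)
        rw [Finset.range_eq_Ico]
        simpa using geom_sum_Ico_le_of_lt_one (m := 0) (n := B) (exp_pos _).le hs1
    _ = C₀ * (1 - s)⁻¹ * s ^ Q := by ring

lemma eventually_one_add_tailBound_lt {ϑ₀ : ℝ} (hϑ₀ : 0 < ϑ₀) (C₀ : ℝ) {r : ℝ} (hr : 1 < r) :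
    ∀ᶠ Q : ℕ in atTop, 1 + tailBound ϑ₀ C₀ Q < r := by
  unfold tailBound
  have hs1 : exp (-(ϑ₀ / 4)) < 1 := exp_lt_one_iff.mpr (by linarith)
  have hlim := ((tendsto_pow_atTop_nhds_zero_of_lt_one (exp_pos _).le hs1).const_mul
    (C₀ * (1 - exp (-(ϑ₀ / 4)))⁻¹)).const_add 1
  rw [mul_zero, add_zero] at hlim
  exact hlim.eventually_lt_const hr

section Increments

variable {W : Type*} {m m0 : MeasurableSpace W} {μ : Measure W} [IsFiniteMeasure μ]

lemma condExp_exp_truncNat_le (hm : m ≤ m0) {X X' : W → ℕ∞} (hX : Measurable X)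
    (hX' : Measurable X') {ϑ₀ C₀ : ℝ} (hϑ₀ : 0 < ϑ₀) (hC₀ : 0 ≤ C₀)
    (hcond : ∀ q : ℕ, 1 ≤ q →
      μ[{w | X w + (q : ℕ∞) ≤ X' w}.indicator (fun _ => (1 : ℝ)) | m] ≤ᵐ[μ]
        fun _ => C₀ * exp (-(q : ℝ) * ϑ₀))
    (Q B : ℕ) :
    μ[fun w => exp (ϑ₀ / 2 * (min (truncNat Q (X' w - X w)) B : ℕ)) | m] ≤ᵐ[μ]
      fun _ => 1 + tailBound ϑ₀ C₀ Q := by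
  have hpair : Measurable fun w => (X w, X' w) := hX.prodMk hX'
  have hY : Measurable fun w => truncNat Q (X' w - X w) :=
    (Measurable.of_discrete (f := fun x : ℕ∞ × ℕ∞ => truncNat Q (x.2 - x.1))).comp hpair
  have hf : Monotone fun k : ℕ => exp (ϑ₀ / 2 * k) := fun a b hab => by
    dsimp only
    gcongr
  refine (condExp_comp_min_le hm hY hf B
    (p := fun q => C₀ * exp (-((max (q + 1) Q : ℕ) : ℝ) * ϑ₀)) fun q _ => ?_).trans
    (ae_of_all _ fun _ => ?_)
  · have hsub : {w | q < truncNat Q (X' w - X w)} ⊆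
        {w | X w + ((max (q + 1) Q : ℕ) : ℕ∞) ≤ X' w} := fun w hw =>
      add_max_le_of_le_truncNat (Nat.le_add_left 1 q) hw
    have hA : MeasurableSet {w | X w + ((max (q + 1) Q : ℕ) : ℕ∞) ≤ X' w} :=
      hpair (MeasurableSet.of_discrete
        (s := {x : ℕ∞ × ℕ∞ | x.1 + ((max (q + 1) Q : ℕ) : ℕ∞) ≤ x.2}))
    refine (condExp_mono ((integrable_const 1).indicator (measurableSet_lt measurable_const hY))
      ((integrable_const 1).indicator hA) (ae_of_all _ fun w => ?_)).trans
      (hcond _ (le_max_of_le_left (Nat.le_add_left 1 q)))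
    exact Set.indicator_le_indicator_of_subset hsub (fun _ => zero_le_one) w
  · simpa using sum_exp_mul_exp_le_tailBound hϑ₀ hC₀ Q B

end Increments

lemma integrable_finset_prod_of_le {W ι : Type*} [MeasurableSpace W] {μ : Measure W}
    [IsFiniteMeasure μ]
    (s : Finset ι) {G : ι → W → ℝ} (hG : ∀ i, Measurable (G i)) {M : ℝ}
    (hG0 : ∀ i w, 0 ≤ G i w) (hGM : ∀ i w, G i w ≤ M) :
    Integrable (fun w => ∏ i ∈ s, G i w) μ :=
  Integrable.of_bound (Finset.measurable_prod s fun i _ => hG i).aestronglyMeasurable (M ^ s.card)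
    (ae_of_all _ fun w => by
      rw [Real.norm_of_nonneg (prod_nonneg fun i _ => hG0 i w), ← prod_const]
      exact prod_le_prod (fun i _ => hG0 i w) fun i _ => hGM i w)

section Filtration

variable {W : Type*} {m0 : MeasurableSpace W} {μ : Measure W} [IsProbabilityMeasure μ]
  {ℱ : Filtration ℕ m0}

lemma integral_prod_Icc_le_pow {G : ℕ → W → ℝ} (hG : ∀ i, Measurable[ℱ i] (G i)) {M c : ℝ}
    (hG0 : ∀ i w, 0 ≤ G i w) (hGM : ∀ i w, G i w ≤ M) (hc0 : 0 ≤ c)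
    (hc : ∀ i, μ[G (i + 1) | ℱ i] ≤ᵐ[μ] fun _ => c) (n : ℕ) :
    ∫ w, ∏ i ∈ Icc 1 n, G i w ∂μ ≤ c ^ n := by
  have hG' : ∀ i, Measurable (G i) := fun i => (hG i).mono (ℱ.le i) le_rfl
  induction n with
  | zero => simp
  | succ n ih =>
    set F := fun w => ∏ i ∈ Icc 1 n, G i w
    have hF : StronglyMeasurable[ℱ n] F :=
      (Finset.measurable_prod _ fun i hi =>
        (hG i).mono (ℱ.mono (mem_Icc.mp hi).2) le_rfl).stronglyMeasurable
    have hsplit : (fun w => ∏ i ∈ Icc 1 (n + 1), G i w) = F * G (n + 1) := by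
      ext w
      exact prod_Icc_succ_top (by omega) _
    have hpull : μ[F * G (n + 1) | ℱ n] =ᵐ[μ] F * μ[G (n + 1) | ℱ n] :=
      condExp_mul_of_stronglyMeasurable_left hF
        (hsplit ▸ integrable_finset_prod_of_le _ hG' hG0 hGM)
        (Integrable.of_bound (hG' _).aestronglyMeasurable M (ae_of_all _ fun w => by
          rw [Real.norm_of_nonneg (hG0 _ w)]
          exact hGM _ w))
    calc ∫ w, ∏ i ∈ Icc 1 (n + 1), G i w ∂μ = ∫ w, μ[F * G (n + 1) | ℱ n] w ∂μ := by
          rw [integral_condExp (ℱ.le n), hsplit]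
      _ ≤ ∫ w, F w * c ∂μ := by
          refine integral_mono_ae integrable_condExp
            ((integrable_finset_prod_of_le _ hG' hG0 hGM).mul_const c) ?_
          filter_upwards [hpull, hc n] with w hpull_w hc_w
          rw [hpull_w, Pi.mul_apply]
          exact mul_le_mul_of_nonneg_left hc_w (prod_nonneg fun i _ => hG0 i w)
      _ = c * ∫ w, F w ∂μ := by rw [integral_mul_const, mul_comm]
      _ ≤ c ^ (n + 1) := by rw [pow_succ']; gcongr

end Filtration

lemma le_sum_min_of_le_sum {ι : Type*} {s : Finset ι} {a : ι → ℝ} (ha : ∀ i ∈ s, 0 ≤ a i)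
    {x B : ℝ} (hB : 0 ≤ B) (hxB : x ≤ B) (hx : x ≤ ∑ i ∈ s, a i) : x ≤ ∑ i ∈ s, min (a i) B := by
  by_cases hall : ∀ i ∈ s, a i ≤ B
  · rwa [sum_congr rfl fun i hi => min_eq_left (hall i hi)]
  · push Not at hall
    obtain ⟨j, hj, hBj⟩ := hall
    calc x ≤ min (a j) B := by rwa [min_eq_right hBj.le]
      _ ≤ ∑ i ∈ s, min (a i) B :=
        single_le_sum (f := fun i => min (a i) B)
          (fun i hi => le_min (ha i hi) hB) hj

section LargeDeviation

variable {W : Type*} {m0 : MeasurableSpace W} {μ : Measure W} [IsProbabilityMeasure μ]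
  {ℱ : Filtration ℕ m0} {ξ : ℕ → W → ℕ∞} {ϑ₀ C₀ : ℝ}

theorem measureReal_le_sum_truncQ_le (hξ : ∀ i, Measurable[ℱ i] (ξ i))
    (hϑ₀ : 0 < ϑ₀) (hC₀ : 0 ≤ C₀)
    (hcond : ∀ i q : ℕ, 1 ≤ i → 1 ≤ q →
      ∀ᵐ w ∂μ,
        (μ[Set.indicator {w | ξ (i - 1) w + (q : ℕ∞) ≤ ξ i w} (fun _ => (1 : ℝ)) | ℱ (i - 1)]) w
          ≤ C₀ * exp (-(q : ℝ) * ϑ₀))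
    (Q n B : ℕ) {x : ℝ} (hxB : x ≤ B) :
    μ.real {w | x ≤ ∑ i ∈ Icc 1 n, truncQ Q (ξ i w - ξ (i - 1) w)} ≤
      exp (-(ϑ₀ / 2) * x) * (1 + tailBound ϑ₀ C₀ Q) ^ n := by
  -- Capping the increments at `B ≥ x` keeps the event but makes the exponential moments bounded.
  set Y : ℕ → W → ℕ := fun i w => min (truncNat Q (ξ i w - ξ (i - 1) w)) B
  set G : ℕ → W → ℝ := fun i w => exp (ϑ₀ / 2 * Y i w)
  have hY : ∀ i, Measurable[ℱ i] (Y i) := fun i =>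
    (Measurable.of_discrete (f := fun x : ℕ∞ × ℕ∞ => min (truncNat Q (x.1 - x.2)) B)).comp
      ((hξ i).prodMk ((hξ (i - 1)).mono (ℱ.mono (Nat.sub_le i 1)) le_rfl))
  have hG : ∀ i, Measurable[ℱ i] (G i) := fun i =>
    measurable_exp.comp (measurable_const.mul (measurable_from_nat.comp (hY i)))
  have hG0 : ∀ i w, 0 ≤ G i w := fun i w => (exp_pos _).le
  have hGB : ∀ i w, G i w ≤ exp (ϑ₀ / 2 * B) := fun i w => by
    simp only [G, Y]
    gcongr
    exact_mod_cast min_le_right _ _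
  have hexp : ∀ w, exp (ϑ₀ / 2 * ∑ i ∈ Icc 1 n, (Y i w : ℝ)) = ∏ i ∈ Icc 1 n, G i w := fun w => by
    rw [mul_sum, exp_sum]
  have hsub : {w | x ≤ ∑ i ∈ Icc 1 n, truncQ Q (ξ i w - ξ (i - 1) w)} ⊆
      {w | x ≤ ∑ i ∈ Icc 1 n, (Y i w : ℝ)} := fun w hw => by
    simp only [Set.mem_ofPred_eq, Y, Nat.cast_min, truncQ_eq_truncNat] at hw ⊢
    exact le_sum_min_of_le_sum (fun i _ => Nat.cast_nonneg _) (Nat.cast_nonneg B) hxB hw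
  have hstep : ∀ i, μ[G (i + 1) | ℱ i] ≤ᵐ[μ]
      fun _ => 1 + tailBound ϑ₀ C₀ Q := fun i => by
    have h := condExp_exp_truncNat_le (ℱ.le i) ((hξ i).mono (ℱ.le i) le_rfl)
      ((hξ (i + 1)).mono (ℱ.le (i + 1)) le_rfl) hϑ₀ hC₀
      (fun q hq => by
        have h := hcond (i + 1) q (Nat.le_add_left 1 i) hq
        rwa [Nat.add_sub_cancel] at h) Q B
    simpa [G, Y] using h
  calc μ.real {w | x ≤ ∑ i ∈ Icc 1 n, truncQ Q (ξ i w - ξ (i - 1) w)}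
      ≤ μ.real {w | x ≤ ∑ i ∈ Icc 1 n, (Y i w : ℝ)} := measureReal_mono hsub
    _ ≤ exp (-(ϑ₀ / 2) * x) * mgf (fun w => ∑ i ∈ Icc 1 n, (Y i w : ℝ)) μ (ϑ₀ / 2) :=
        measure_ge_le_exp_mul_mgf x (by positivity) (by
          simpa only [hexp] using integrable_finset_prod_of_le (Icc 1 n)
            (fun i => (hG i).mono (ℱ.le i) le_rfl) hG0 hGB)
    _ ≤ _ := by
        gcongr
        simp only [mgf, hexp]
        exact integral_prod_Icc_le_pow hG hG0 hGB (by linarith [tailBound_nonneg hϑ₀ hC₀ Q]) hstep n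

end LargeDeviation

theorem stmt_0_general
    {W : Type*} [m0 : MeasurableSpace W] (μ : Measure W) [IsProbabilityMeasure μ]
    (ξ : ℕ → W → ℕ∞) (𝓕 : ℕ → MeasurableSpace W)
    (hle : ∀ i, 𝓕 i ≤ m0) (hmono : Monotone 𝓕)
    (hmeas : ∀ i, Measurable[𝓕 i] (ξ i))
    (ϑ₀ C₀ : ℝ) (hϑ₀ : 0 < ϑ₀) (hC₀ : 1 ≤ C₀)
    (hcond : ∀ i q : ℕ, 1 ≤ i → 1 ≤ q →
      ∀ᵐ w ∂μ,
        (μ[Set.indicator {w | ξ (i - 1) w + (q : ℕ∞) ≤ ξ i w} (fun _ => (1 : ℝ)) | 𝓕 (i - 1)]) w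
          ≤ C₀ * Real.exp (-(q : ℝ) * ϑ₀)) :
    ∀ ε : ℝ, 0 < ε → ∃ Q : ℕ, 0 < Q ∧ ∃ ϑ : ℝ, 0 < ϑ ∧
      ∀ n : ℕ, 1 ≤ n →
        μ {w | ε ≤ (1 / (n : ℝ)) * ∑ i ∈ Finset.Icc 1 n, truncQ Q (ξ i w - ξ (i - 1) w)}
          ≤ ENNReal.ofReal (Real.exp (-ϑ * n)) := by
  intro ε hε
  let ℱ : Filtration ℕ m0 := ⟨𝓕, hmono, hle⟩
  obtain ⟨Q, hQ, hQ1⟩ := ((eventually_one_add_tailBound_lt hϑ₀ C₀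
    (one_lt_exp_iff.mpr (by positivity : 0 < ϑ₀ / 4 * ε))).and (eventually_ge_atTop 1)).exists
  refine ⟨Q, hQ1, ϑ₀ / 4 * ε, by positivity, fun n hn => ?_⟩
  have hn0 : (0 : ℝ) < n := by exact_mod_cast hn
  have hset : {w | ε ≤ (1 / (n : ℝ)) * ∑ i ∈ Icc 1 n, truncQ Q (ξ i w - ξ (i - 1) w)} =
      {w | ε * n ≤ ∑ i ∈ Icc 1 n, truncQ Q (ξ i w - ξ (i - 1) w)} := by
    ext w
    rw [Set.mem_ofPred_eq, Set.mem_ofPred_eq, one_div, inv_mul_eq_div, le_div_iff₀ hn0]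
  rw [ENNReal.le_ofReal_iff_toReal_le (measure_ne_top μ _) (exp_pos _).le, hset]
  calc μ.real {w | ε * n ≤ ∑ i ∈ Icc 1 n, truncQ Q (ξ i w - ξ (i - 1) w)}
      ≤ exp (-(ϑ₀ / 2) * (ε * n)) * (1 + tailBound ϑ₀ C₀ Q) ^ n :=
        measureReal_le_sum_truncQ_le (ℱ := ℱ) hmeas hϑ₀ (by linarith) hcond Q n _
          (Nat.le_ceil (ε * n))
    _ ≤ exp (-(ϑ₀ / 2) * (ε * n)) * exp (ϑ₀ / 4 * ε) ^ n := by
        gcongr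
        linarith [tailBound_nonneg hϑ₀ (by linarith : 0 ≤ C₀) Q]
    _ = exp (-(ϑ₀ / 4 * ε) * n) := by
        rw [← exp_nat_mul, ← exp_add]
        ring_nf

/-- Large deviation lemma (Lemma 3.1). -/
theorem stmt_0
    {W : Type*} [m0 : MeasurableSpace W] (μ : Measure W) [IsProbabilityMeasure μ]
    (ξ : ℕ → W → ℕ∞) (𝓕 : ℕ → MeasurableSpace W)
    (hle : ∀ i, 𝓕 i ≤ m0) (hmono : Monotone 𝓕)
    (hmeas : ∀ i, Measurable[𝓕 i] (ξ i))
    (hzero : ∀ w, ξ 0 w = 0)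
    (hfin : ∀ i, ∀ᵐ w ∂μ, ξ i w ≠ ⊤)
    (hincr : ∀ i, 1 ≤ i → ∀ᵐ w ∂μ, ξ (i - 1) w ≤ ξ i w)
    (ϑ₀ C₀ : ℝ) (hϑ₀ : 0 < ϑ₀) (hC₀ : 1 ≤ C₀)
    (hcond : ∀ i q : ℕ, 1 ≤ i → 1 ≤ q →
      ∀ᵐ w ∂μ,
        (μ[Set.indicator {w | ξ (i - 1) w + (q : ℕ∞) ≤ ξ i w} (fun _ => (1 : ℝ)) | 𝓕 (i - 1)]) w
          ≤ C₀ * Real.exp (-(q : ℝ) * ϑ₀)) :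
    ∀ ε : ℝ, 0 < ε → ∃ Q : ℕ, 0 < Q ∧ ∃ ϑ : ℝ, 0 < ϑ ∧
      ∀ n : ℕ, 1 ≤ n →
        μ {w | ε ≤ (1 / (n : ℝ)) * ∑ i ∈ Finset.Icc 1 n, truncQ Q (ξ i w - ξ (i - 1) w)}
          ≤ ENNReal.ofReal (Real.exp (-ϑ * n)) :=
  stmt_0_general (m0 := m0) μ ξ 𝓕 hle hmono hmeas ϑ₀ C₀ hϑ₀ hC₀ hcond
end

section
/- Let ψ_t : [−1,1]^m → ℝ (t ≥ 0) be a family of measurable functions, uniformly bounded by some M > 0, such that there exist C ≥ 1, ϑ > 0 with |∫ ψ_t(w) ψ_l(w) dw| ≤ C e^{−ϑ |l − t|} for all t, l > 0, and such that for some C₁ ≥ 1 the map t ↦ ψ_t(w) is C₁-Lipschitz for each w. Then for Lebesgue-almost every w ∈ [−1,1]^m, (1/T) ∫_0^T ψ_t(w) dt → 0 as T → ∞. -/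
/-!
Write `S_T(w) = ∫₀ᵀ ψ_t(w) dt`. Expanding the square and using Fubini, the correlation bound
gives `∫ S_T² ≤ (2C/ϑ) T`, so the time averages `S_T / T` have second moment `O(1/T)`. Along the
times `T = n²` these second moments are summable, hence `S_{n²}(w) / n² → 0` for almost every `w`.
Since `ψ` is bounded, the average moves by `O(1/n)` between `n²` and `(n+1)²`, which fills the gaps.
-/

open MeasureTheory Filter Set Topology Real

section Averages

variable {g : ℝ → ℝ} {M : ℝ}

theorem abs_intervalIntegral_le (hg : ∀ t, |g t| ≤ M) (a b : ℝ) :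
    |∫ t in a..b, g t| ≤ M * |b - a| := by
  simpa using intervalIntegral.norm_integral_le_of_norm_le_const (a := a) (b := b)
    fun t _ => (norm_eq_abs (g t)).trans_le (hg t)

theorem abs_average_le (hg : ∀ t, |g t| ≤ M) (T : ℝ) :
    |(1 / T) * ∫ t in 0..T, g t| ≤ M := by
  rcases eq_or_ne T 0 with rfl | hT
  · simpa using (abs_nonneg _).trans (hg 0)
  · calc |(1 / T) * ∫ t in 0..T, g t| ≤ |1 / T| * (M * |T - 0|) := by
          rw [abs_mul]; gcongr; exact abs_intervalIntegral_le hg 0 T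
      _ = M := by rw [sub_zero, abs_one_div]; field_simp [abs_ne_zero.2 hT]

theorem abs_average_sub_average_le (hg : ∀ t, |g t| ≤ M)
    (hgi : ∀ a b, IntervalIntegrable g volume a b) {S T : ℝ} (hS : 0 < S) (hST : S ≤ T) :
    |(1 / T) * (∫ t in 0..T, g t) - (1 / S) * ∫ t in 0..S, g t| ≤ 2 * M * (T - S) / T := by
  have hT : 0 < T := hS.trans_le hST
  have htail : |∫ t in S..T, g t| ≤ M * (T - S) := by
    simpa [abs_of_nonneg (sub_nonneg.2 hST)] using abs_intervalIntegral_le hg S T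
  have hhead : |∫ t in 0..S, g t| ≤ M * S := by
    simpa [abs_of_pos hS] using abs_intervalIntegral_le hg 0 S
  have hsplit : (1 / T) * (∫ t in 0..T, g t) - (1 / S) * ∫ t in 0..S, g t
      = (1 / T) * (∫ t in S..T, g t) - (T - S) / (T * S) * ∫ t in 0..S, g t := by
    rw [← intervalIntegral.integral_add_adjacent_intervals (hgi 0 S) (hgi S T)]
    field_simp
    ring
  have hcoef : 0 ≤ (T - S) / (T * S) := div_nonneg (sub_nonneg.2 hST) (by positivity)
  calc _ ≤ 1 / T * (M * (T - S)) + (T - S) / (T * S) * (M * S) := by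
        rw [hsplit]
        refine (abs_sub _ _).trans (add_le_add ?_ ?_)
        · rw [abs_mul, abs_of_pos (one_div_pos.2 hT)]; gcongr
        · rw [abs_mul, abs_of_nonneg hcoef]; gcongr
    _ = 2 * M * (T - S) / T := by field_simp; ring

theorem tendsto_average_of_tendsto_average_sq (hg : ∀ t, |g t| ≤ M)
    (hgi : ∀ a b, IntervalIntegrable g volume a b)
    (h : Tendsto (fun k : ℕ => (1 / (k : ℝ) ^ 2) * ∫ t in 0..(k : ℝ) ^ 2, g t) atTop (𝓝 0)) :
    Tendsto (fun T => (1 / T) * ∫ t in 0..T, g t) atTop (𝓝 0) := by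
  set k : ℝ → ℕ := fun T => ⌊√T⌋₊
  have hk : Tendsto k atTop atTop := tendsto_nat_floor_atTop.comp tendsto_sqrt_atTop
  have hM : 0 ≤ M := (abs_nonneg _).trans (hg 0)
  have hgap : ∀ᶠ T in atTop, ‖(1 / T) * (∫ t in 0..T, g t)
      - (1 / (k T : ℝ) ^ 2) * ∫ t in 0..(k T : ℝ) ^ 2, g t‖ ≤ 6 * M / k T := by
    filter_upwards [eventually_ge_atTop 1] with T hT
    have hk1 : (1 : ℝ) ≤ k T := by exact_mod_cast Nat.le_floor (by simpa using hT)
    have hkT : (k T : ℝ) ^ 2 ≤ T :=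
      (le_sqrt (Nat.cast_nonneg _) (zero_le_one.trans hT)).1 (Nat.floor_le (sqrt_nonneg T))
    have hTk : T < ((k T : ℝ) + 1) ^ 2 :=
      (sqrt_lt' (by positivity)).1 (Nat.lt_floor_add_one √T)
    calc _ ≤ 2 * M * (T - (k T : ℝ) ^ 2) / T :=
          abs_average_sub_average_le hg hgi (by positivity) hkT
      _ ≤ 2 * M * (3 * k T) / (k T : ℝ) ^ 2 := by gcongr; nlinarith
      _ = 6 * M / k T := by field_simp; ring
  simpa only [Function.comp_def, add_sub_cancel, zero_add] using (h.comp hk).add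
    (squeeze_zero_norm' hgap ((tendsto_const_div_atTop_nhds_zero_nat (6 * M)).comp hk))

end Averages

section ExponentialKernel

variable {ϑ : ℝ}

theorem integral_exp_neg_mul_abs (hϑ : 0 < ϑ) : ∫ x, exp (-ϑ * |x|) = 2 / ϑ := by
  rw [integral_comp_abs (f := fun x => exp (-ϑ * x)), integral_exp_mul_Ioi (neg_neg_of_pos hϑ)]
  field_simp
  simp

theorem integrable_exp_neg_mul_abs (hϑ : 0 < ϑ) : Integrable fun x => exp (-ϑ * |x|) :=
  .of_integral_ne_zero <| by rw [integral_exp_neg_mul_abs hϑ]; positivity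

theorem setIntegral_exp_neg_mul_abs_sub_le {C : ℝ} (hϑ : 0 < ϑ) (hC : 0 ≤ C) (s : Set ℝ)
    (t : ℝ) : ∫ l in s, C * exp (-ϑ * |l - t|) ≤ 2 * C / ϑ :=
  calc ∫ l in s, C * exp (-ϑ * |l - t|)
      ≤ ∫ l, C * exp (-ϑ * |l - t|) :=
        setIntegral_le_integral (((integrable_exp_neg_mul_abs hϑ).comp_sub_right t).const_mul C)
          (.of_forall fun _ => by positivity)
    _ = 2 * C / ϑ := by
        rw [integral_const_mul, integral_sub_right_eq_self (fun x => exp (-ϑ * |x|)),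
          integral_exp_neg_mul_abs hϑ]
        ring

end ExponentialKernel

theorem abs_mul_le_of_forall_abs_le {ι α : Type*} {ψ : ι → α → ℝ} {M : ℝ}
    (hbdd : ∀ t w, |ψ t w| ≤ M) (t l : ι) (w : α) : |ψ t w * ψ l w| ≤ M * M := by
  rw [abs_mul]
  exact mul_le_mul (hbdd t w) (hbdd l w) (abs_nonneg _) ((abs_nonneg _).trans (hbdd t w))

section SecondMoment

variable {α β : Type*} [MeasurableSpace α] [MeasurableSpace β] {μ : Measure α} {ν : Measure β}
  [IsFiniteMeasure μ] {M : ℝ}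

theorem integral_sq_integral_eq_integral_prod [IsFiniteMeasure ν] {ψ : β → α → ℝ}
    (hψ : Measurable (Function.uncurry ψ)) (hbdd : ∀ t w, |ψ t w| ≤ M) :
    ∫ w, (∫ t, ψ t w ∂ν) ^ 2 ∂μ = ∫ p, (∫ w, ψ p.1 w * ψ p.2 w ∂μ) ∂(ν.prod ν) := by
  have hint : Integrable (Function.uncurry fun w (p : β × β) => ψ p.1 w * ψ p.2 w)
      (μ.prod (ν.prod ν)) :=
    .of_bound ((hψ.comp (measurable_snd.fst.prodMk measurable_fst)).mul
        (hψ.comp (measurable_snd.snd.prodMk measurable_fst))).aestronglyMeasurable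
      (M * M) (.of_forall fun q => abs_mul_le_of_forall_abs_le hbdd q.2.1 q.2.2 q.1)
  simp_rw [sq, ← integral_prod_mul]
  exact integral_integral_swap hint

variable {ψ : ℝ → α → ℝ} {C ϑ : ℝ}

theorem stronglyMeasurable_intervalIntegral (hψ : Measurable (Function.uncurry ψ)) (a b : ℝ) :
    StronglyMeasurable fun w => ∫ t in a..b, ψ t w :=
  have h := (hψ.comp measurable_swap).stronglyMeasurable
  h.integral_prod_right'.sub h.integral_prod_right'

theorem integrable_sq_average (hψ : Measurable (Function.uncurry ψ))
    (hbdd : ∀ t w, |ψ t w| ≤ M) (T : ℝ) :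
    Integrable (fun w => ((1 / T) * ∫ t in 0..T, ψ t w) ^ 2) μ :=
  .of_bound
    (((stronglyMeasurable_intervalIntegral hψ 0 T).const_mul _).pow 2).aestronglyMeasurable
    (M ^ 2) (.of_forall fun w => by
      simpa [norm_pow] using pow_le_pow_left₀ (abs_nonneg _) (abs_average_le (hbdd · w) T) 2)

theorem integral_sq_intervalIntegral_le (hψ : Measurable (Function.uncurry ψ))
    (hbdd : ∀ t w, |ψ t w| ≤ M) (hC : 0 ≤ C) (hϑ : 0 < ϑ)
    (hcorr : ∀ t l, 0 < t → 0 < l → |∫ w, ψ t w * ψ l w ∂μ| ≤ C * exp (-ϑ * |l - t|))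
    {T : ℝ} (hT : 0 ≤ T) :
    ∫ w, (∫ t in 0..T, ψ t w) ^ 2 ∂μ ≤ 2 * C / ϑ * T := by
  set ν := volume.restrict (Ioc 0 T)
  have hK : Integrable (fun p : ℝ × ℝ => ∫ w, ψ p.1 w * ψ p.2 w ∂μ) (ν.prod ν) := by
    refine .of_bound ?_ (M * M * μ.real univ) (.of_forall fun p => ?_)
    · exact ((hψ.comp (measurable_fst.fst.prodMk measurable_snd)).mul
        (hψ.comp (measurable_fst.snd.prodMk measurable_snd))).stronglyMeasurable
        |>.integral_prod_right' |>.aestronglyMeasurable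
    · simpa using norm_integral_le_of_norm_le_const (μ := μ)
        (f := fun w => ψ p.1 w * ψ p.2 w)
        (.of_forall fun w => abs_mul_le_of_forall_abs_le hbdd p.1 p.2 w)
  have hdecay : Integrable (fun p : ℝ × ℝ => C * exp (-ϑ * |p.2 - p.1|)) (ν.prod ν) :=
    .of_bound (by fun_prop) C (.of_forall fun p => by
      rw [norm_mul, norm_of_nonneg hC, norm_of_nonneg (exp_nonneg _)]
      exact mul_le_of_le_one_right hC (exp_le_one_iff.2 (by nlinarith [abs_nonneg (p.2 - p.1)])))
  have hK_le : ∀ᵐ p ∂(ν.prod ν), ∫ w, ψ p.1 w * ψ p.2 w ∂μ ≤ C * exp (-ϑ * |p.2 - p.1|) := by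
    rw [Measure.prod_restrict]
    filter_upwards [ae_restrict_mem (measurableSet_Ioc.prod measurableSet_Ioc)] with p hp
    exact (le_abs_self _).trans (hcorr p.1 p.2 hp.1.1 hp.2.1)
  calc ∫ w, (∫ t in 0..T, ψ t w) ^ 2 ∂μ
      = ∫ p, (∫ w, ψ p.1 w * ψ p.2 w ∂μ) ∂(ν.prod ν) := by
        simp_rw [intervalIntegral.integral_of_le hT]
        exact integral_sq_integral_eq_integral_prod hψ hbdd
    _ ≤ ∫ p, C * exp (-ϑ * |p.2 - p.1|) ∂(ν.prod ν) := integral_mono_ae hK hdecay hK_le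
    _ = ∫ t, ∫ l, C * exp (-ϑ * |l - t|) ∂ν ∂ν := integral_prod _ hdecay
    _ ≤ ∫ _, 2 * C / ϑ ∂ν :=
        integral_mono hdecay.integral_prod_left (integrable_const _)
          fun t => setIntegral_exp_neg_mul_abs_sub_le hϑ hC _ t
    _ = 2 * C / ϑ * T := by simp [ν, hT, mul_comm]

theorem integral_sq_average_le (hψ : Measurable (Function.uncurry ψ))
    (hbdd : ∀ t w, |ψ t w| ≤ M) (hC : 0 ≤ C) (hϑ : 0 < ϑ)
    (hcorr : ∀ t l, 0 < t → 0 < l → |∫ w, ψ t w * ψ l w ∂μ| ≤ C * exp (-ϑ * |l - t|))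
    {T : ℝ} (hT : 0 ≤ T) :
    ∫ w, ((1 / T) * ∫ t in 0..T, ψ t w) ^ 2 ∂μ ≤ 2 * C / ϑ / T := by
  simp_rw [mul_pow, integral_const_mul]
  rcases hT.eq_or_lt with rfl | hT
  · simp
  calc (1 / T) ^ 2 * ∫ w, (∫ t in 0..T, ψ t w) ^ 2 ∂μ ≤ (1 / T) ^ 2 * (2 * C / ϑ * T) := by
        gcongr; exact integral_sq_intervalIntegral_le hψ hbdd hC hϑ hcorr hT.le
    _ = 2 * C / ϑ / T := by field_simp

end SecondMoment

theorem ae_tendsto_zero_of_summable_integral_sq {α : Type*} [MeasurableSpace α] {μ : Measure α}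
    {f : ℕ → α → ℝ} (hint : ∀ n, Integrable (fun w => f n w ^ 2) μ)
    (hsum : Summable fun n => ∫ w, f n w ^ 2 ∂μ) :
    ∀ᵐ w ∂μ, Tendsto (fun n => f n w) atTop (𝓝 0) := by
  have hmeas : ∀ n, AEMeasurable (fun w => ENNReal.ofReal (f n w ^ 2)) μ :=
    fun n => (hint n).aemeasurable.ennreal_ofReal
  have hfin : ∫⁻ w, ∑' n, ENNReal.ofReal (f n w ^ 2) ∂μ ≠ ⊤ := by
    rw [lintegral_tsum hmeas]
    simp_rw [← ofReal_integral_eq_lintegral_ofReal (hint _) (.of_forall fun _ => sq_nonneg _)]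
    rw [← ENNReal.ofReal_tsum_of_nonneg (fun n => integral_nonneg fun _ => sq_nonneg _) hsum]
    exact ENNReal.ofReal_ne_top
  filter_upwards [ae_lt_top' (AEMeasurable.tsum hmeas) hfin] with w hw
  have hsq : Summable fun n => f n w ^ 2 :=
    (ENNReal.summable_toReal hw.ne).congr fun n => ENNReal.toReal_ofReal (sq_nonneg _)
  refine (tendsto_zero_iff_abs_tendsto_zero _).2 ?_
  simpa [Function.comp_def, sqrt_sq_eq_abs] using hsq.tendsto_atTop_zero.sqrt

theorem stmt_3_general
    (m : ℕ)
    (ψ : ℝ → (Fin m → ℝ) → ℝ)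
    (hmeas : Measurable (Function.uncurry ψ))
    (M : ℝ) (hbdd : ∀ t w, |ψ t w| ≤ M)
    (C ϑ : ℝ) (hC : 1 ≤ C) (hϑ : 0 < ϑ)
    (hcorr : ∀ t l : ℝ, 0 < t → 0 < l →
      |∫ w in Set.Icc (fun _ : Fin m => (-1 : ℝ)) (fun _ => 1), ψ t w * ψ l w|
        ≤ C * Real.exp (-ϑ * |l - t|)) :
    ∀ᵐ w ∂(volume.restrict (Set.Icc (fun _ : Fin m => (-1 : ℝ)) (fun _ => 1))),
      Tendsto (fun T : ℝ => (1 / T) * ∫ t in (0 : ℝ)..T, ψ t w) atTop (nhds 0) := by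
  have : IsFiniteMeasure (volume.restrict (Set.Icc (fun _ : Fin m => (-1 : ℝ)) (fun _ => 1))) :=
    isFiniteMeasure_restrict.2 isCompact_Icc.measure_lt_top.ne
  have hsum : Summable fun n : ℕ => 2 * C / ϑ / (n : ℝ) ^ 2 :=
    ((summable_one_div_nat_pow.2 one_lt_two).mul_left (2 * C / ϑ)).congr fun n => by ring
  have hsq_avg := ae_tendsto_zero_of_summable_integral_sq
    (fun n => integrable_sq_average hmeas hbdd _)
    (hsum.of_nonneg_of_le (fun n => integral_nonneg fun _ => sq_nonneg _)
      fun n => integral_sq_average_le hmeas hbdd (by linarith) hϑ hcorr (sq_nonneg (n : ℝ)))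
  filter_upwards [hsq_avg] with w hw
  exact tendsto_average_of_tendsto_average_sq (hbdd · w)
    (fun a b => intervalIntegrable_const.mono_fun'
      (hmeas.comp (measurable_id.prodMk measurable_const)).aestronglyMeasurable
      (.of_forall fun t => hbdd t w)) hw

/-- Law of large numbers for continuous families with exponentially decaying correlations
(Lemma 3.3 of Chaika–Eskin / Lemma 3.2–3.3 in the paper). -/
theorem stmt_3
    (m : ℕ) (hm : 1 ≤ m)
    (ψ : ℝ → (Fin m → ℝ) → ℝ)
    (hmeas : Measurable (Function.uncurry ψ))
    (M : ℝ) (hM : 0 < M) (hbdd : ∀ t w, |ψ t w| ≤ M)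
    (C ϑ : ℝ) (hC : 1 ≤ C) (hϑ : 0 < ϑ)
    (hcorr : ∀ t l : ℝ, 0 < t → 0 < l →
      |∫ w in Set.Icc (fun _ : Fin m => (-1 : ℝ)) (fun _ => 1), ψ t w * ψ l w|
        ≤ C * Real.exp (-ϑ * |l - t|))
    (C₁ : ℝ) (hC₁ : 1 ≤ C₁)
    (hLip : ∀ w t l, |ψ t w - ψ l w| ≤ C₁ * |t - l|) :
    ∀ᵐ w ∂(volume.restrict (Set.Icc (fun _ : Fin m => (-1 : ℝ)) (fun _ => 1))),
      Tendsto (fun T : ℝ => (1 / T) * ∫ t in (0 : ℝ)..T, ψ t w) atTop (nhds 0) :=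
  stmt_3_general m ψ hmeas M hbdd C ϑ hC hϑ hcorr
end

section
/- Let Φ be the root system of type D_n (n ≥ 4) realized in ℝ^n with positive roots Φ⁺ = {e_i ± e_j : 1 ≤ i < j ≤ n}. Let k = ⌊(n−3)/2⌋ and define, for 1 ≤ i ≤ k, β_{2i−1} = e_{2i−1} − e_{2i} and β_{2i} = e_{2i−1} + e_{2i}, and additionally β_{n−2} = e_{n−2} + e_{n−1}, β_{n−1} = e_{n−2} − e_n, β_n = e_{n−2} − e_{n−1} (for n odd). Then all these vectors lie in Φ⁺ and the sum of any two of them (possibly equal) is not in Φ⁺. -/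
/-!
Every positive root of `D_n` has squared norm 2. Two members `e_a ± e_b`, `e_c ± e_d` of the
family either share their first index (`a = c`) or have disjoint supports, and in both cases
their inner product is nonnegative. Hence their sum has squared norm at least 4, so it is not a
root.
-/

open EuclideanSpace
open scoped RealInnerProductSpace

namespace RootSystemD

def posRoots (n : ℕ) : Set (EuclideanSpace ℝ (Fin n)) :=
  {v | ∃ p q : Fin n, p < q ∧ (v = single p 1 + single q 1 ∨ v = single p 1 - single q 1)}

lemma norm_sq_of_mem_posRoots {n : ℕ} {v : EuclideanSpace ℝ (Fin n)} (hv : v ∈ posRoots n) :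
    ‖v‖ ^ 2 = 2 := by
  obtain ⟨p, q, hpq, rfl | rfl⟩ := hv <;>
  · simp [norm_add_sq_real, norm_sub_sq_real, inner_single_left, hpq.ne']
    norm_num

lemma add_notMem_posRoots_of_inner_nonneg {n : ℕ} {v w : EuclideanSpace ℝ (Fin n)}
    (hv : v ∈ posRoots n) (hw : w ∈ posRoots n) (hvw : 0 ≤ ⟪v, w⟫) :
    v + w ∉ posRoots n := by
  intro h
  have := norm_add_sq_real v w
  rw [norm_sq_of_mem_posRoots h, norm_sq_of_mem_posRoots hv, norm_sq_of_mem_posRoots hw] at this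
  linarith

lemma inner_nonneg_of_eq_or_disjoint {n : ℕ} {a b c d : Fin n}
    (h : a = c ∨ (a ≠ c ∧ a ≠ d ∧ b ≠ c ∧ b ≠ d)) {v w : EuclideanSpace ℝ (Fin n)}
    (hv : v = single a 1 + single b 1 ∨ v = single a 1 - single b 1)
    (hw : w = single c 1 + single d 1 ∨ w = single c 1 - single d 1) :
    0 ≤ ⟪v, w⟫ := by
  rcases h with rfl | ⟨hac, had, hbc, hbd⟩ <;>
  rcases hv with rfl | rfl <;> rcases hw with rfl | rfl <;>
  simp [inner_add_left, inner_add_right, inner_sub_left, inner_sub_right, inner_single_left,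
    PiLp.single_apply, *] <;> split_ifs <;> simp_all

/-- The 0-based index pairs `(a, b)` of the vectors `β = e_a ± e_b` of the family. -/
def IsBetaPair (n k a b : ℕ) : Prop :=
  (∃ i, 1 ≤ i ∧ i ≤ k ∧ a = 2 * i - 2 ∧ b = 2 * i - 1) ∨ (a = n - 3 ∧ (b = n - 2 ∨ b = n - 1))

namespace IsBetaPair

variable {n k a b c d : ℕ}

lemma lt_and_lt (hnk : 2 * k + 3 ≤ n) (h : IsBetaPair n k a b) : a < b ∧ b < n := by
  rcases h with ⟨i, _, _, rfl, rfl⟩ | ⟨rfl, rfl | rfl⟩ <;> omega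

lemma eq_or_disjoint (hnk : 2 * k + 3 ≤ n) (h : IsBetaPair n k a b) (h' : IsBetaPair n k c d) :
    a = c ∨ (a ≠ c ∧ a ≠ d ∧ b ≠ c ∧ b ≠ d) := by
  rcases h with ⟨i, _, _, rfl, rfl⟩ | ⟨rfl, rfl | rfl⟩ <;>
  rcases h' with ⟨j, _, _, rfl, rfl⟩ | ⟨rfl, rfl | rfl⟩ <;> omega

end IsBetaPair

end RootSystemD

open RootSystemD

theorem stmt_13_general
    (n : ℕ) (hn : 4 ≤ n)
    (e : Fin n → EuclideanSpace ℝ (Fin n))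
    (he : ∀ i, e i = EuclideanSpace.single i 1)
    (em : ℕ → EuclideanSpace ℝ (Fin n))
    (hem : ∀ j : ℕ, ∀ h : j < n, em j = e ⟨j, h⟩)
    (Φplus : Set (EuclideanSpace ℝ (Fin n)))
    (hΦplus : Φplus = {v | ∃ p q : Fin n, p < q ∧ (v = e p + e q ∨ v = e p - e q)})
    (k : ℕ) (hk : k = (n - 3) / 2)
    (B : Set (EuclideanSpace ℝ (Fin n)))
    (hB : B = {v | (∃ i : ℕ, 1 ≤ i ∧ i ≤ k ∧
          (v = em (2 * i - 2) - em (2 * i - 1) ∨ v = em (2 * i - 2) + em (2 * i - 1))) ∨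
        v = em (n - 3) + em (n - 2) ∨ v = em (n - 3) - em (n - 1) ∨
        v = em (n - 3) - em (n - 2)}) :
    B ⊆ Φplus ∧ ∀ v ∈ B, ∀ w ∈ B, v + w ∉ Φplus := by
  obtain rfl : e = fun i => single i 1 := funext he
  obtain rfl : Φplus = posRoots n := hΦplus
  have hnk : 2 * k + 3 ≤ n := by omega
  have hB_pairs : ∀ v ∈ B, ∃ a b : ℕ, IsBetaPair n k a b ∧ (v = em a + em b ∨ v = em a - em b) := by
    subst hB
    rintro v (⟨i, hi, hik, h | h⟩ | h | h | h)
    exacts [⟨_, _, .inl ⟨i, hi, hik, rfl, rfl⟩, .inr h⟩, ⟨_, _, .inl ⟨i, hi, hik, rfl, rfl⟩, .inl h⟩,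
      ⟨_, _, .inr ⟨rfl, .inl rfl⟩, .inl h⟩, ⟨_, _, .inr ⟨rfl, .inr rfl⟩, .inr h⟩,
      ⟨_, _, .inr ⟨rfl, .inl rfl⟩, .inr h⟩]
  have hB_roots : ∀ v ∈ B, ∃ a b : Fin n, IsBetaPair n k a b ∧
      (v = single a 1 + single b 1 ∨ v = single a 1 - single b 1) := by
    intro v hv
    obtain ⟨a, b, hab, hv⟩ := hB_pairs v hv
    obtain ⟨hab', hbn⟩ := hab.lt_and_lt hnk
    refine ⟨⟨a, hab'.trans hbn⟩, ⟨b, hbn⟩, hab, ?_⟩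
    simpa only [hem _ (hab'.trans hbn), hem _ hbn] using hv
  refine ⟨fun v hv => ?_, fun v hv w hw => ?_⟩
  · obtain ⟨a, b, hab, hv⟩ := hB_roots v hv
    exact ⟨a, b, (hab.lt_and_lt hnk).1, hv⟩
  · obtain ⟨a, b, hab, hv⟩ := hB_roots v hv
    obtain ⟨c, d, hcd, hw⟩ := hB_roots w hw
    refine add_notMem_posRoots_of_inner_nonneg ⟨a, b, (hab.lt_and_lt hnk).1, hv⟩
      ⟨c, d, (hcd.lt_and_lt hnk).1, hw⟩ (inner_nonneg_of_eq_or_disjoint ?_ hv hw)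
    simpa only [Fin.ext_iff, ne_eq] using hab.eq_or_disjoint hnk hcd

/-- Strongly orthogonal-type family in `D_n` (n odd, n ≥ 4... i.e. n ≥ 5 odd): the listed
vectors are positive roots and no sum of two of them is a positive root (Lemma A.3, case
`D_n` with `n` odd). Indices are 0-based: the paper's `e_j` is `em (j - 1)`. -/
theorem stmt_13
    (n : ℕ) (hn : 4 ≤ n) (hodd : Odd n)
    (e : Fin n → EuclideanSpace ℝ (Fin n))
    (he : ∀ i, e i = EuclideanSpace.single i 1)
    (em : ℕ → EuclideanSpace ℝ (Fin n))
    (hem : ∀ j : ℕ, ∀ h : j < n, em j = e ⟨j, h⟩)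
    (Φplus : Set (EuclideanSpace ℝ (Fin n)))
    (hΦplus : Φplus = {v | ∃ p q : Fin n, p < q ∧ (v = e p + e q ∨ v = e p - e q)})
    (k : ℕ) (hk : k = (n - 3) / 2)
    (B : Set (EuclideanSpace ℝ (Fin n)))
    (hB : B = {v | (∃ i : ℕ, 1 ≤ i ∧ i ≤ k ∧
          (v = em (2 * i - 2) - em (2 * i - 1) ∨ v = em (2 * i - 2) + em (2 * i - 1))) ∨
        v = em (n - 3) + em (n - 2) ∨ v = em (n - 3) - em (n - 1) ∨
        v = em (n - 3) - em (n - 2)}) :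
    B ⊆ Φplus ∧ ∀ v ∈ B, ∀ w ∈ B, v + w ∉ Φplus :=
  stmt_13_general n hn e he em hem Φplus hΦplus k hk B hB
end
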